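/- arXiv:2311.06605 — 2 statements merged into one kernel-verified Lean document; each statement's English description precedes it below -/
import Mathlib

section
/- Let S be an (l−k)-dimensional linear subspace of ℝ^l, let M ⊂ S be a measurable set, let D be a nonsingular l×l real matrix, and let B be a k×l real matrix whose rows form a basis of the orthogonal complement (DS)^⊥ of the subspace DS = {Dx : x ∈ S}. Then the (l−k)-dimensional volume satisfies vol_{l−k}(DM) = |det(D)| · sqrt( det(B Bᵀ) / det(B D Dᵀ Bᵀ) ) · vol_{l−k}(M), where DM = {Dx : x ∈ M}. -/
open Matrix MeasureTheory

/-!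
Parametrize `S` by a linear isomorphism `ρ : ℝ^(l-k) → S` with matrix `P`. The area formula for
linear maps (`LinearMap.hausdorffMeasure_image`) reduces the claim to
`normDet (DP) = |det D| · sqrt(det(BBᵀ) / det(BDDᵀBᵀ)) · normDet P`, where
`normDet X ^ 2 = det(XᵀX)`. Squared, this is the identity
`det(PᵀDᵀDP) · det(BDDᵀBᵀ) = det(D)² · det(PᵀP) · det(BBᵀ)`, which holds as soon as `BDP = 0`:
for the square matrices `G = [P | DᵀBᵀ]` and `H = [DP | Bᵀ]` the products `GᵀG` and `HᵀH` are
block diagonal and `GᵀDᵀH` is block triangular, with the four Gram matrices on their diagonals.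
-/

namespace Matrix

section Determinant

variable {R m n : Type*} [CommRing R] [Fintype m] [DecidableEq m] [Fintype n] [DecidableEq n]

theorem det_transpose_mul_mul_eq_submatrix (X Y : Matrix m n R) (Z : Matrix m m R) (e : m ≃ n) :
    (Xᵀ * Z * Y).det = (X.submatrix id e).det * Z.det * (Y.submatrix id e).det := by
  rw [← det_submatrix_equiv_self e, submatrix_mul _ _ _ id _ Function.bijective_id,
    submatrix_mul _ _ _ id _ Function.bijective_id, det_mul, det_mul, ← transpose_submatrix,
    det_transpose, submatrix_id_id]

theorem det_transpose_mul_self_eq_submatrix_sq (X : Matrix m n R) (e : m ≃ n) :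
    (Xᵀ * X).det = (X.submatrix id e).det ^ 2 := by
  simpa [sq] using det_transpose_mul_mul_eq_submatrix X X 1 e

theorem det_gram_mul_det_gram_of_mul_mul_eq_zero [IsDomain R] {d k : Type*} [Fintype d]
    [DecidableEq d] [Fintype k] [DecidableEq k] (e : m ≃ d ⊕ k) (D : Matrix m m R)
    (P : Matrix m d R) (B : Matrix k m R) (hBDP : B * D * P = 0)
    (hP : (Pᵀ * Dᵀ * D * P).det ≠ 0) (hB : (B * D * Dᵀ * Bᵀ).det ≠ 0) :
    (Pᵀ * Dᵀ * D * P).det * (B * D * Dᵀ * Bᵀ).det = D.det ^ 2 * (Pᵀ * P).det * (B * Bᵀ).det := by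
  have hPDB : Pᵀ * Dᵀ * Bᵀ = 0 := by
    rw [← transpose_mul, ← transpose_mul, ← Matrix.mul_assoc, hBDP, transpose_zero]
  set G := fromCols P (Dᵀ * Bᵀ)
  set H := fromCols (D * P) Bᵀ
  have hG : Gᵀ * G = fromBlocks (Pᵀ * P) 0 0 (B * D * Dᵀ * Bᵀ) := by
    simp only [G, transpose_fromCols, fromRows_mul_fromCols, transpose_mul, transpose_transpose,
      ← Matrix.mul_assoc, hPDB, hBDP]
  have hH : Hᵀ * H = fromBlocks (Pᵀ * Dᵀ * D * P) 0 0 (B * Bᵀ) := by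
    simp only [H, transpose_fromCols, fromRows_mul_fromCols, transpose_mul, transpose_transpose,
      ← Matrix.mul_assoc, hPDB, hBDP]
  have hGDH : Gᵀ * Dᵀ * H =
      fromBlocks (Pᵀ * Dᵀ * D * P) 0 (B * D * Dᵀ * D * P) (B * D * Dᵀ * Bᵀ) := by
    rw [transpose_fromCols, fromRows_mul, fromRows_mul_fromCols]
    simp only [transpose_mul, transpose_transpose, ← Matrix.mul_assoc, hPDB]
  have hGdet := det_transpose_mul_self_eq_submatrix_sq G e
  have hHdet := det_transpose_mul_self_eq_submatrix_sq H e
  have hGDHdet := det_transpose_mul_mul_eq_submatrix G H Dᵀ e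
  rw [hG, det_fromBlocks_zero₁₂] at hGdet
  rw [hH, det_fromBlocks_zero₁₂] at hHdet
  rw [hGDH, det_fromBlocks_zero₁₂, det_transpose] at hGDHdet
  refine mul_left_cancel₀ (mul_ne_zero hP hB) ?_
  -- square `hGDHdet` and substitute `hGdet`, `hHdet`
  linear_combination ((G.submatrix id e).det * D.det * (H.submatrix id e).det +
    (Pᵀ * Dᵀ * D * P).det * (B * D * Dᵀ * Bᵀ).det) * hGDHdet -
    D.det ^ 2 * (H.submatrix id e).det ^ 2 * hGdet -
    D.det ^ 2 * (Pᵀ * P).det * (B * D * Dᵀ * Bᵀ).det * hHdet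

end Determinant

section Euclidean

variable {𝕜 m n k : Type*} [RCLike 𝕜]

theorem injective_toEuclideanLin_of_det_ne_zero [Fintype m] [DecidableEq m] {D : Matrix m m 𝕜}
    (hD : D.det ≠ 0) :
    Function.Injective (toEuclideanLin D) :=
  ((Module.End.isUnit_iff _).mp ((LinearMap.isUnit_iff_isUnit_det _).mpr
    (by simpa using hD.isUnit))).injective

theorem injective_toEuclideanLin_transpose [Fintype k] [DecidableEq k] {B : Matrix k m 𝕜}
    (hB : LinearIndependent 𝕜 fun i => WithLp.toLp 2 (B i)) :
    Function.Injective (toEuclideanLin Bᵀ) := by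
  have h : ∀ x, toEuclideanLin Bᵀ x =
      Fintype.linearCombination 𝕜 (fun i => WithLp.toLp 2 (B i)) x := by
    intro x
    ext j
    simp [Fintype.linearCombination_apply, mulVec, dotProduct, mul_comm]
  intro x y hxy
  rw [h, h] at hxy
  exact WithLp.ofLp_injective 2
    (linearIndependent_iff_injective_fintypeLinearCombination.mp hB hxy)

theorem mul_eq_zero_of_rows_mem_orthogonal_range [Fintype m] [Fintype n] [DecidableEq n]
    {B : Matrix k m ℝ} {X : Matrix m n ℝ}
    (hB : ∀ i, WithLp.toLp 2 (B i) ∈ (LinearMap.range (toEuclideanLin X))ᗮ) : B * X = 0 := by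
  ext i j
  have := (Submodule.mem_orthogonal' _ _).mp (hB i) _
    (LinearMap.mem_range_self _ (EuclideanSpace.single j 1))
  simpa [PiLp.inner_apply, mul_apply, mulVec, dotProduct, mul_comm, Pi.single_apply] using this

theorem normDet_toEuclideanLin_sq [Fintype m] [DecidableEq m] [Fintype n] [DecidableEq n]
    (X : Matrix m n ℝ) :
    (toEuclideanLin X).normDet ^ 2 = (Xᵀ * X).det := by
  have := (toEuclideanLin X).normDet_sq
  rw [← toEuclideanLin_conjTranspose_eq_adjoint, ← toLpLin_mul_same, LinearMap.det_toLpLin] at this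
  simpa using this

theorem normDet_toEuclideanLin_ne_zero [Fintype m] [Fintype n] [DecidableEq n]
    {X : Matrix m n ℝ} (hX : Function.Injective (toEuclideanLin X)) :
    (toEuclideanLin X).normDet ≠ 0 :=
  fun h => LinearMap.normDet_eq_zero_iff_ker_ne_bot.mp h (LinearMap.ker_eq_bot.mpr hX)

theorem normDet_toEuclideanLin_mul_eq [Fintype m] [DecidableEq m] [Fintype n] [DecidableEq n]
    [Fintype k] [DecidableEq k] (e : m ≃ n ⊕ k) (D : Matrix m m ℝ) (P : Matrix m n ℝ)
    (B : Matrix k m ℝ) (hD : D.det ≠ 0) (hP : Function.Injective (toEuclideanLin P))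
    (hB : LinearIndependent ℝ fun i => WithLp.toLp 2 (B i)) (hBDP : B * D * P = 0) :
    (toEuclideanLin (D * P)).normDet =
      |D.det| * √((B * Bᵀ).det / (B * D * Dᵀ * Bᵀ).det) * (toEuclideanLin P).normDet := by
  have hDP : Function.Injective (toEuclideanLin (D * P)) := by
    rw [toLpLin_mul_same]
    exact (injective_toEuclideanLin_of_det_ne_zero hD).comp hP
  have hDB : Function.Injective (toEuclideanLin (Dᵀ * Bᵀ)) := by
    rw [toLpLin_mul_same]
    exact (injective_toEuclideanLin_of_det_ne_zero (by rwa [det_transpose])).comp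
      (injective_toEuclideanLin_transpose hB)
  have hDPsq : (Pᵀ * Dᵀ * D * P).det = (toEuclideanLin (D * P)).normDet ^ 2 := by
    simp only [normDet_toEuclideanLin_sq, transpose_mul, Matrix.mul_assoc]
  have hDBsq : (B * D * Dᵀ * Bᵀ).det = (toEuclideanLin (Dᵀ * Bᵀ)).normDet ^ 2 := by
    simp only [normDet_toEuclideanLin_sq, transpose_mul, transpose_transpose, Matrix.mul_assoc]
  have hBsq : (B * Bᵀ).det = (toEuclideanLin Bᵀ).normDet ^ 2 := by
    rw [normDet_toEuclideanLin_sq, transpose_transpose]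
  have hDB₀ := normDet_toEuclideanLin_ne_zero hDB
  have key := det_gram_mul_det_gram_of_mul_mul_eq_zero e D P B hBDP
    (hDPsq ▸ pow_ne_zero 2 (normDet_toEuclideanLin_ne_zero hDP)) (hDBsq ▸ pow_ne_zero 2 hDB₀)
  rw [hDPsq, hDBsq, hBsq, ← normDet_toEuclideanLin_sq] at key
  rw [hBsq, hDBsq, ← div_pow,
    Real.sqrt_sq (div_nonneg (LinearMap.normDet_nonneg _) (LinearMap.normDet_nonneg _)),
    eq_comm, mul_div_assoc', div_mul_eq_mul_div, div_eq_iff hDB₀]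
  refine (sq_eq_sq₀ ?_ ?_).mp ?_
  · exact mul_nonneg (mul_nonneg (abs_nonneg _) (LinearMap.normDet_nonneg _))
      (LinearMap.normDet_nonneg _)
  · exact mul_nonneg (LinearMap.normDet_nonneg _) (LinearMap.normDet_nonneg _)
  · rw [mul_pow, mul_pow, mul_pow, sq_abs]
    linear_combination key.symm

end Euclidean

end Matrix

theorem LinearMap.hausdorffMeasure_image_eq_of_normDet_comp {U V W : Type*}
    [NormedAddCommGroup U] [InnerProductSpace ℝ U] [FiniteDimensional ℝ U] [MeasurableSpace U]
    [BorelSpace U] [NormedAddCommGroup V] [InnerProductSpace ℝ V] [MeasurableSpace V]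
    [BorelSpace V] [NormedAddCommGroup W] [InnerProductSpace ℝ W] [MeasurableSpace W]
    [BorelSpace W] (ρ : U →ₗ[ℝ] V) (g : V →ₗ[ℝ] W) {M : Set V} (hM : M ⊆ LinearMap.range ρ)
    {c : ℝ} (hc : 0 ≤ c) (h : (g ∘ₗ ρ).normDet = c * ρ.normDet) :
    μH[Module.finrank ℝ U] (g '' M) = ENNReal.ofReal c * μH[Module.finrank ℝ U] M := by
  have hρM : ρ '' (ρ ⁻¹' M) = M := Set.image_preimage_eq_of_subset hM
  rw [← hρM, ← Set.image_comp, ← LinearMap.coe_comp, hausdorffMeasure_image, h,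
    ENNReal.ofReal_mul hc, mul_assoc, ← hausdorffMeasure_image]

theorem volume_image_section_general
    {l k : ℕ} (hkl : k ≤ l)
    (S : Submodule ℝ (EuclideanSpace ℝ (Fin l)))
    (hS : Module.finrank ℝ S = l - k)
    (M : Set (EuclideanSpace ℝ (Fin l))) (hMS : M ⊆ (S : Set (EuclideanSpace ℝ (Fin l))))
    (D : Matrix (Fin l) (Fin l) ℝ) (hD : D.det ≠ 0)
    (B : Matrix (Fin k) (Fin l) ℝ)
    (hBli : LinearIndependent ℝ (fun i : Fin k => (WithLp.toLp 2 (B i) : EuclideanSpace ℝ (Fin l))))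
    (hBspan : Submodule.span ℝ (Set.range fun i : Fin k => (WithLp.toLp 2 (B i) : EuclideanSpace ℝ (Fin l)))
      = (S.map (Matrix.toEuclideanLin D))ᗮ) :
    μH[((l - k : ℕ) : ℝ)] ((Matrix.toEuclideanLin D) '' M)
      = ENNReal.ofReal (|D.det| * Real.sqrt ((B * Bᵀ).det / (B * D * Dᵀ * Bᵀ).det)) *
        μH[((l - k : ℕ) : ℝ)] M := by
  let e : EuclideanSpace ℝ (Fin (l - k)) ≃ₗ[ℝ] S := LinearEquiv.ofFinrankEq _ _ (by simp [hS])
  let ρ := S.subtype ∘ₗ e.toLinearMap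
  let P := toEuclideanLin.symm ρ
  have hρ : LinearMap.range ρ = S := by
    rw [LinearMap.range_comp, LinearEquiv.range, Submodule.map_subtype_top]
  have hDP : toEuclideanLin (D * P) = toEuclideanLin D ∘ₗ ρ := by
    rw [toLpLin_mul_same, toEuclideanLin.apply_symm_apply]
  have hBDP : B * D * P = 0 := by
    rw [Matrix.mul_assoc]
    refine mul_eq_zero_of_rows_mem_orthogonal_range fun i => ?_
    rw [hDP, LinearMap.range_comp, hρ, ← hBspan]
    exact Submodule.subset_span (Set.mem_range_self i)
  have hP : Function.Injective (toEuclideanLin P) := by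
    rw [toEuclideanLin.apply_symm_apply]
    exact Subtype.val_injective.comp e.injective
  have hnormDet := normDet_toEuclideanLin_mul_eq
    ((finCongr (Nat.sub_add_cancel hkl).symm).trans finSumFinEquiv.symm) D P B hD hP hBli hBDP
  rw [hDP, toEuclideanLin.apply_symm_apply] at hnormDet
  have := LinearMap.hausdorffMeasure_image_eq_of_normDet_comp ρ _ (hρ ▸ hMS) (by positivity)
    hnormDet
  rwa [finrank_euclideanSpace_fin] at this

/-- **Lemma 1.** Let `S` be an `(l-k)`-dimensional subspace of `ℝ^l`, `M ⊆ S` measurable,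
`D` a nonsingular `l × l` matrix, and let the rows of `B` form a basis of `(DS)ᗮ`. Then
`vol_{l-k}(DM) = |det D| · sqrt(det(BBᵀ)/det(BDDᵀBᵀ)) · vol_{l-k}(M)`. -/
theorem volume_image_section
    {l k : ℕ} (hkl : k ≤ l)
    (S : Submodule ℝ (EuclideanSpace ℝ (Fin l)))
    (hS : Module.finrank ℝ S = l - k)
    (M : Set (EuclideanSpace ℝ (Fin l))) (hMS : M ⊆ (S : Set (EuclideanSpace ℝ (Fin l))))
    (hM : MeasurableSet M)
    (D : Matrix (Fin l) (Fin l) ℝ) (hD : D.det ≠ 0)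
    (B : Matrix (Fin k) (Fin l) ℝ)
    (hBli : LinearIndependent ℝ (fun i : Fin k => (WithLp.toLp 2 (B i) : EuclideanSpace ℝ (Fin l))))
    (hBspan : Submodule.span ℝ (Set.range fun i : Fin k => (WithLp.toLp 2 (B i) : EuclideanSpace ℝ (Fin l)))
      = (S.map (Matrix.toEuclideanLin D))ᗮ) :
    μH[((l - k : ℕ) : ℝ)] ((Matrix.toEuclideanLin D) '' M)
      = ENNReal.ofReal (|D.det| * Real.sqrt ((B * Bᵀ).det / (B * D * Dᵀ * Bᵀ).det)) *
        μH[((l - k : ℕ) : ℝ)] M :=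
  volume_image_section_general hkl S hS M hMS D hD B hBli hBspan
end

section
/- For u, v ∈ ℝ^n, let C^n(y) = {x ∈ ℝ^n : ‖x − y‖_∞ < 1}, D(u,v) = conv(C^n(u) ∪ C^n(v)), and E = conv(C^n(u−v) ∪ C^n(v−u)). Then E = (D(u,v) − v) ∪ (−D(u,v) + v), where D(u,v) − v = {x − v : x ∈ D(u,v)} and −D(u,v) + v = {v − x : x ∈ D(u,v)}. -/
/-!
The cube `C^n(y)` is the open unit ball around `y` for the sup norm, so with `B` the unit ball
at the origin, `conv(C^n(a) ∪ C^n(b)) = [a, b] + B`. The maps `x ↦ x - v` and `x ↦ v - x` are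
affine isometries, carrying `D(u, v)` onto `D(u - v, 0)` and `D(v - u, 0)`; and the segment
`[u - v, v - u]` is the union of its two halves meeting at `0`.
-/

noncomputable section

/-- `C^n(y) = {x ∈ ℝ^n : ‖x - y‖_∞ < 1}`, the open cube of edge length 2 centered at `y`. -/
def openCube {n : ℕ} (y : Fin n → ℝ) : Set (Fin n → ℝ) :=
  {x | ∀ i, |x i - y i| < 1}

/-- `D(u,v) = conv(C^n(u) ∪ C^n(v))`. -/
def cubesHull {n : ℕ} (u v : Fin n → ℝ) : Set (Fin n → ℝ) :=
  convexHull ℝ (openCube u ∪ openCube v)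

open Set Pointwise Metric

theorem convexHull_ball_union_ball {E : Type*} [SeminormedAddCommGroup E] [NormedSpace ℝ E]
    (a b : E) (r : ℝ) :
    convexHull ℝ (ball a r ∪ ball b r) = segment ℝ a b + ball 0 r := by
  have h : ∀ c : E, ball c r = {c} + ball 0 r := fun c => by rw [singleton_add_ball, add_zero]
  rw [h a, h b, ← union_add, singleton_union, convexHull_add, convexHull_pair,
    (convex_ball 0 r).convexHull_eq]

theorem AffineIsometryEquiv.image_convexHull_ball_union_ball {E F : Type*}
    [SeminormedAddCommGroup E] [NormedSpace ℝ E] [SeminormedAddCommGroup F] [NormedSpace ℝ F]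
    (f : E ≃ᵃⁱ[ℝ] F) (a b : E) (r : ℝ) :
    f '' convexHull ℝ (ball a r ∪ ball b r) = convexHull ℝ (ball (f a) r ∪ ball (f b) r) := by
  have hball : ∀ c, f '' ball c r = ball (f c) r := fun c => f.toIsometryEquiv.image_ball c r
  rw [← hball, ← hball, ← image_union]
  exact f.toAffineEquiv.toAffineMap.image_convexHull _

theorem segment_self_neg_eq_union {E : Type*} [AddCommGroup E] [Module ℝ E] (a : E) :
    segment ℝ a (-a) = segment ℝ a 0 ∪ segment ℝ (-a) 0 := by
  have h : ∀ s t : ℝ, segment ℝ (s • a) (t • a) = (· • a) '' uIcc s t := fun s t => by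
    rw [← segment_eq_uIcc]
    exact (image_segment ℝ (LinearMap.toSpanSingleton ℝ E a).toAffineMap s t).symm
  have hI : uIcc (1 : ℝ) (-1) = uIcc 1 0 ∪ uIcc (-1) 0 := by
    rw [uIcc_of_ge, uIcc_of_ge, uIcc_of_le, union_comm, Icc_union_Icc_eq_Icc] <;> norm_num
  have h₁ := h 1 (-1)
  have h₂ := h 1 0
  have h₃ := h (-1) 0
  simp only [neg_smul, one_smul, zero_smul] at h₁ h₂ h₃
  rw [h₁, h₂, h₃, ← image_union, hI]

theorem openCube_eq_ball {n : ℕ} (y : Fin n → ℝ) : openCube y = ball y 1 := by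
  ext x
  simp [openCube, dist_pi_lt_iff one_pos, Real.dist_eq]

theorem cubesHull_eq {n : ℕ} (u v : Fin n → ℝ) :
    cubesHull u v = segment ℝ u v + ball 0 1 := by
  rw [cubesHull, openCube_eq_ball, openCube_eq_ball, convexHull_ball_union_ball]

/-- The set `E = conv(C^n(u-v) ∪ C^n(v-u))` satisfies
`E = (D(u,v) - v) ∪ (-D(u,v) + v)`. -/
theorem E_eq_union_of_translates
    {n : ℕ} (u v : Fin n → ℝ) :
    cubesHull (u - v) (v - u)
      = (fun x => x - v) '' cubesHull u v ∪ (fun x => v - x) '' cubesHull u v := by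
  have h₁ : (fun x => x - v) '' cubesHull u v = cubesHull (u - v) 0 := by
    simpa [cubesHull, openCube_eq_ball, neg_add_eq_sub] using
      (AffineIsometryEquiv.constVAdd ℝ (Fin n → ℝ) (-v)).image_convexHull_ball_union_ball u v 1
  have h₂ : (fun x => v - x) '' cubesHull u v = cubesHull (v - u) 0 := by
    simpa [cubesHull, openCube_eq_ball] using
      (AffineIsometryEquiv.constVSub ℝ v).image_convexHull_ball_union_ball u v 1
  rw [h₁, h₂, cubesHull_eq, cubesHull_eq, cubesHull_eq, ← neg_sub u v,
    segment_self_neg_eq_union, union_add]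
end
end
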